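/- arXiv:cs/0701123 — 3 statements merged into one kernel-verified Lean document; each statement's English description precedes it below -/
import Mathlib

section
/- If S is an infinite binary sequence with finite-state strong dimension 0, then S is finite-state shallow. -/
open scoped ENNReal

/-- A finite-state transducer with state set `Fin n`, binary input alphabet,
binary-string outputs, initial state `q0`, and all states reachable from `q0`. -/
structure FST where
  /-- number of states -/
  n : ℕ
  npos : 0 < n
  /-- transition function -/
  δ : Fin n → Bool → Fin n
  /-- output function -/
  ν : Fin n → Bool → List Bool
  /-- initial state -/
  q0 : Fin n
  /-- every state is reachable from the initial state -/
  reach : ∀ q : Fin n, ∃ x : List Bool, x.foldl δ q0 = q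

namespace FST

/-- The state reached from state `q` after reading input `x`. -/
def stateFrom (T : FST) (q : Fin T.n) (x : List Bool) : Fin T.n := x.foldl T.δ q

/-- The extended transition function: the state reached from the initial state on input `x`. -/
def finalState (T : FST) (x : List Bool) : Fin T.n := T.stateFrom T.q0 x

/-- The output produced starting from state `q` on input `x`. -/
def outFrom (T : FST) : Fin T.n → List Bool → List Bool
  | _, [] => []
  | q, a :: x => T.ν q a ++ T.outFrom (T.δ q a) x

/-- The output of `T` on input `x` (started in the initial state). -/
def out (T : FST) (x : List Bool) : List Bool := T.outFrom T.q0 x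

/-- `T` is information lossless if the pair (output, final state) determines the input. -/
def IL (T : FST) : Prop := Function.Injective fun x : List Bool => (T.out x, T.finalState x)

/-- The data of an FST, as a member of an encodable type. -/
def toSigma (T : FST) :
    Σ n : ℕ, (Fin n → Bool → Fin n) × (Fin n → Bool → List Bool) × Fin n :=
  ⟨T.n, T.δ, T.ν, T.q0⟩

/-- The length `|T|` of the standard binary encoding of the FST `T`. -/
noncomputable def size (T : FST) : ℕ := Nat.size (Encodable.encode T.toSigma)

end FST

/-- The `k`-FS decompression complexity of `x`: the length of a shortest program `p`
such that some FST of encoding length at most `k` outputs `x` on input `p`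
(`⊤` if there is no such program). -/
noncomputable def Dfs (k : ℕ) (x : List Bool) : ℕ∞ :=
  ⨅ (p : List Bool) (_ : ∃ T : FST, T.size ≤ k ∧ T.out p = x), (p.length : ℕ∞)

/-- The first `n` bits of the infinite sequence `S`, as a list. -/
def pre (S : ℕ → Bool) (n : ℕ) : List Bool := (List.range n).map S

/-- A sequence is finite-state deep if for some `α > 0` and every `k` there is `k'` such that
`Dfs k (S↾n) - Dfs k' (S↾n) ≥ α n` for infinitely many `n`. -/
def FSDeep (S : ℕ → Bool) : Prop :=
  ∃ α : ℝ, 0 < α ∧ ∀ k : ℕ, ∃ k' : ℕ, ∃ᶠ n in Filter.atTop,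
    Dfs k' (pre S n) + (⌈α * n⌉₊ : ℕ∞) ≤ Dfs k (pre S n)

/-- The finite-state strong dimension of a sequence:
`Dim_FS(S) = lim_{k→∞} limsup_n Dfs k (S↾n) / n` (the limit over `k` of the
nonincreasing quantities is their infimum). -/
noncomputable def DimFS (S : ℕ → Bool) : ℝ≥0∞ :=
  ⨅ k : ℕ, Filter.atTop.limsup fun n : ℕ => ((Dfs k (pre S n) : ℝ≥0∞) / n)

open Filter

theorem ENNReal.ofReal_le_div_of_ceil_mul_le {α : ℝ} (hα : 0 ≤ α) {n : ℕ} (hn : n ≠ 0)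
    {d : ℕ∞} (h : (⌈α * n⌉₊ : ℕ∞) ≤ d) : ENNReal.ofReal α ≤ (d : ℝ≥0∞) / n := by
  rw [ENNReal.le_div_iff_mul_le (Or.inl (Nat.cast_ne_zero.mpr hn))
    (Or.inl (ENNReal.natCast_ne_top n)), ← ENNReal.ofReal_natCast, ← ENNReal.ofReal_mul hα]
  calc ENNReal.ofReal (α * n) ≤ ENNReal.ofReal (⌈α * n⌉₊ : ℝ) :=
        ENNReal.ofReal_le_ofReal (Nat.le_ceil _)
    _ = ((⌈α * n⌉₊ : ℕ∞) : ℝ≥0∞) := by simp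
    _ ≤ d := by exact_mod_cast h

theorem ENNReal.ofReal_le_limsup_div_of_frequently_ceil_mul_le {α : ℝ} (hα : 0 ≤ α)
    {u : ℕ → ℕ∞} (h : ∃ᶠ n : ℕ in atTop, (⌈α * n⌉₊ : ℕ∞) ≤ u n) :
    ENNReal.ofReal α ≤ atTop.limsup fun n => (u n : ℝ≥0∞) / n :=
  le_limsup_of_frequently_le <| (h.and_eventually (eventually_ne_atTop 0)).mono
    fun _ ⟨hle, hn⟩ => ENNReal.ofReal_le_div_of_ceil_mul_le hα hn hle

/-- The depth gap is bounded by `Dfs k` itself, so a linear gap forces linear complexity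
at every level `k`. -/
theorem FSDeep.exists_pos_ofReal_le_dimFS {S : ℕ → Bool} (hS : FSDeep S) :
    ∃ α : ℝ, 0 < α ∧ ENNReal.ofReal α ≤ DimFS S := by
  obtain ⟨α, hα, hdeep⟩ := hS
  refine ⟨α, hα, le_iInf fun k => ?_⟩
  obtain ⟨k', hk'⟩ := hdeep k
  exact ENNReal.ofReal_le_limsup_div_of_frequently_ceil_mul_le hα.le
    (hk'.mono fun _ hle => le_trans le_add_self hle)

/-- A sequence of finite-state strong dimension 0 is finite-state shallow. -/
theorem fs_trivial_is_shallow (S : ℕ → Bool) (h : DimFS S = 0) : ¬ FSDeep S := by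
  intro hS
  obtain ⟨α, hα, hle⟩ := hS.exists_pos_ofReal_le_dimFS
  rw [h, nonpos_iff_eq_zero, ENNReal.ofReal_eq_zero] at hle
  exact hle.not_gt hα
end

section
/- If S is an infinite binary sequence with finite-state dimension 1 (equivalently, S is Borel normal), then S is finite-state shallow. -/
open scoped ENNReal

/-- The finite-state dimension of a sequence:
`dim_FS(S) = lim_{k→∞} liminf_n Dfs k (S↾n) / n` (the limit over `k` of the
nonincreasing quantities is their infimum). -/
noncomputable def dimFS (S : ℕ → Bool) : ℝ≥0∞ :=
  ⨅ k : ℕ, Filter.atTop.liminf fun n : ℕ => ((Dfs k (pre S n) : ℝ≥0∞) / n)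

def idFST : FST where
  n := 1
  npos := one_pos
  δ := fun q _ => q
  ν := fun _ a => [a]
  q0 := 0
  reach := fun _ => ⟨[], Subsingleton.elim _ _⟩

lemma idFST_outFrom (q : Fin 1) (x : List Bool) : idFST.outFrom q x = x := by
  induction x generalizing q with
  | nil => rfl
  | cons a x ih => simpa [FST.outFrom, idFST] using ih _

lemma Dfs_idFST_size_le_length (x : List Bool) : Dfs idFST.size x ≤ x.length :=
  iInf₂_le x ⟨idFST, le_rfl, idFST_outFrom _ x⟩

lemma pre_length (S : ℕ → Bool) (n : ℕ) : (pre S n).length = n := by simp [pre]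

lemma ENat.toENNReal_div_le_one_sub_ofReal {d : ℕ∞} {n : ℕ} {α : ℝ} (hα : 0 ≤ α)
    (h : d + (⌈α * n⌉₊ : ℕ∞) ≤ n) : (d : ℝ≥0∞) / n ≤ 1 - ENNReal.ofReal α := by
  lift d to ℕ using ne_top_of_le_ne_top (ENat.natCast_ne_top n) (le_of_add_le_left h)
  rcases n.eq_zero_or_pos with rfl | hn
  · obtain rfl : d = 0 := by simpa using h
    simp
  have hdn : (d : ℝ) + ⌈α * n⌉₊ ≤ n := mod_cast h
  rw [← ENNReal.ofReal_one, ← ENNReal.ofReal_sub _ hα, ENat.toENNReal_coe,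
    ← ENNReal.ofReal_natCast, ← ENNReal.ofReal_natCast n,
    ← ENNReal.ofReal_div_of_pos (mod_cast hn)]
  refine ENNReal.ofReal_le_ofReal ?_
  rw [div_le_iff₀ (mod_cast hn)]
  linarith [Nat.le_ceil (α * n)]

/-- Deep sequences are compressible: the identity transducer bounds `Dfs k (S↾n)` by `n`,
so depth forces `Dfs k' (S↾n) ≤ (1 - α) n` infinitely often. -/
theorem FSDeep.dimFS_lt_one {S : ℕ → Bool} (hS : FSDeep S) : dimFS S < 1 := by
  obtain ⟨α, hα, hdeep⟩ := hS
  obtain ⟨k', hk'⟩ := hdeep idFST.size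
  have hfreq : ∃ᶠ n in Filter.atTop,
      (Dfs k' (pre S n) : ℝ≥0∞) / n ≤ 1 - ENNReal.ofReal α :=
    hk'.mono fun n hn => ENat.toENNReal_div_le_one_sub_ofReal hα.le <|
      hn.trans <| (Dfs_idFST_size_le_length _).trans_eq <| by rw [pre_length]
  calc dimFS S ≤ Filter.atTop.liminf fun n : ℕ => (Dfs k' (pre S n) : ℝ≥0∞) / n :=
        iInf_le _ k'
    _ ≤ 1 - ENNReal.ofReal α := Filter.liminf_le_of_frequently_le' hfreq
    _ < 1 := ENNReal.sub_lt_self ENNReal.one_ne_top one_ne_zero (by simpa using hα)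

/-- A sequence of finite-state dimension 1 (equivalently, a Borel normal sequence) is
finite-state shallow. -/
theorem fs_random_is_shallow (S : ℕ → Bool) (h : dimFS S = 1) : ¬ FSDeep S :=
  fun hS => hS.dimFS_lt_one.ne h
end

section
/- There exists a finite-state deep sequence, i.e., an infinite binary sequence S and α > 0 such that for every k ∈ ℕ there exists k' ∈ ℕ such that D^FS_k(S↾n) − D^FS_{k'}(S↾n) ≥ αn for infinitely many n. -/
/-!
For each `k` take a block `ρ_k` of length `L_k = 3k + 2N_k + 1`, `N_k = 8(k + 1)`, that occurs in
no output of an FST of size at most `k` run for at most `N_k` steps from any state: such runs,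
together with an offset, account for fewer than `2 ^ L_k` windows of length `L_k`. An FST of size
at most `k` that outputs `w ρ_k^m` must then spend more than `N_k` input bits on each copy of
`ρ_k`, so `Dfs k (w ρ_k^m) ≥ m N_k`, whereas a three-state transducer that copies literal bits
given in pairs `0 b` and expands `1 0` to `ρ_k` shows `Dfs k' (w ρ_k^m) ≤ 2|w| + 2m`.
The sequence is built in stages, stage `t` appending `|w| + 1` copies of `ρ_k` with
`k = (unpair t).1` to the prefix `w` built so far; at the end of every stage the gap between
the two complexities is at least a fifth of the length.
-/

namespace Encodable

theorem encode_le_encode_of_mem {α : Type*} [Encodable α] {a : α} :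
    ∀ {l : List α}, a ∈ l → encode a ≤ encode l
  | b :: l, h => by
    rw [encode_list_cons]
    rcases List.mem_cons.1 h with rfl | h
    · exact (Nat.left_le_pair _ _).trans (Nat.le_succ _)
    · exact ((encode_le_encode_of_mem h).trans (Nat.right_le_pair _ _)).trans (Nat.le_succ _)

theorem encode_apply_le_encode_finPi {n : ℕ} {π : Fin n → Type*} [∀ i, Encodable (π i)]
    (f : ∀ i, π i) (i : Fin n) : encode (f i) ≤ encode f := by
  have hf : encode f = encode (List.ofFn fun j => (⟨j, f j⟩ : Σ j, π j)) := by
    change encode (((Equiv.vectorEquivFin _ n).symm fun j => (⟨j, f j⟩ : Σ j, π j)).toList) = _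
    simp [Equiv.vectorEquivFin]
  rw [hf]
  calc encode (f i) ≤ encode (⟨i, f i⟩ : Σ j, π j) := by
        rw [encode_sigma_val]; exact Nat.right_le_pair _ _
    _ ≤ _ := encode_le_encode_of_mem (List.mem_ofFn.2 ⟨i, rfl⟩)

theorem encode_apply_le_encode_fintypeArrow {α β : Type*} [Encodable α] [Fintype α]
    [Encodable β] (f : α → β) (a : α) : encode (f a) ≤ encode f := by
  have h := encode_apply_le_encode_finPi (π := fun _ => β) (f ∘ fintypeEquivFin.symm)
    (fintypeEquivFin a)
  rwa [Function.comp_apply, Equiv.symm_apply_apply] at h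

end Encodable

open Encodable

namespace FST

theorem toSigma_injective : Function.Injective FST.toSigma := by
  rintro ⟨n, _, δ, ν, q0, _⟩ ⟨n', _, δ', ν', q0', _⟩ h
  obtain ⟨rfl : n = n', h⟩ := Sigma.ext_iff.1 h
  obtain ⟨rfl, rfl, rfl⟩ := Prod.ext_iff.1 (eq_of_heq h)
  rfl

variable {T : FST} {k : ℕ}

theorem n_lt_two_pow (hT : T.size ≤ k) : T.n < 2 ^ k :=
  calc T.n ≤ encode T.toSigma := Nat.left_le_pair _ _
    _ < 2 ^ k := Nat.size_le.1 hT

theorem length_ν_lt_two_pow (hT : T.size ≤ k) (q : Fin T.n) (b : Bool) :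
    (T.ν q b).length < 2 ^ k :=
  calc (T.ν q b).length ≤ encode (T.ν q b) := length_le_encode _
    _ ≤ encode (T.ν q) := encode_apply_le_encode_fintypeArrow _ _
    _ ≤ encode T.ν := encode_apply_le_encode_finPi _ _
    _ ≤ encode (T.ν, T.q0) := Nat.left_le_pair _ _
    _ ≤ encode (T.δ, T.ν, T.q0) := Nat.right_le_pair _ _
    _ ≤ encode T.toSigma := Nat.right_le_pair _ _
    _ < 2 ^ k := Nat.size_le.1 hT

theorem injective_encode_toSigma_of_size_le (k : ℕ) :
    Function.Injective fun T : {T : FST // T.size ≤ k} =>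
      (⟨encode T.1.toSigma, Nat.size_le.1 T.2⟩ : Fin (2 ^ k)) :=
  fun _ _ h => Subtype.ext (toSigma_injective (encode_injective (Fin.mk.inj_iff.1 h)))

instance (k : ℕ) : Finite {T : FST // T.size ≤ k} :=
  Finite.of_injective _ (injective_encode_toSigma_of_size_le k)

theorem card_size_le_le (k : ℕ) : Nat.card {T : FST // T.size ≤ k} ≤ 2 ^ k := by
  simpa using Nat.card_le_card_of_injective _ (injective_encode_toSigma_of_size_le k)

theorem outFrom_append (T : FST) (q : Fin T.n) (s t : List Bool) :
    T.outFrom q (s ++ t) = T.outFrom q s ++ T.outFrom (T.stateFrom q s) t := by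
  induction s generalizing q with
  | nil => rfl
  | cons a s ih => simp [outFrom, stateFrom, ih]

theorem length_outFrom_le (hT : T.size ≤ k) (q : Fin T.n) (s : List Bool) :
    (T.outFrom q s).length ≤ s.length * 2 ^ k := by
  induction s generalizing q with
  | nil => simp [outFrom]
  | cons a s ih =>
    simp only [outFrom, List.length_append, List.length_cons]
    linarith [length_ν_lt_two_pow hT q a, ih (T.δ q a)]

theorem exists_split_of_le_length_outFrom (T : FST) (q : Fin T.n) (p : List Bool) {n : ℕ}
    (hn : 0 < n) (hp : n ≤ (T.outFrom q p).length) :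
    ∃ s a t, p = s ++ a :: t ∧ (T.outFrom q s).length < n ∧
      n ≤ (T.outFrom q (s ++ [a])).length := by
  induction p generalizing q n with
  | nil => simp only [outFrom, List.length_nil] at hp; omega
  | cons b p ih =>
    simp only [outFrom, List.length_append] at hp
    by_cases hb : n ≤ (T.ν q b).length
    · exact ⟨[], b, p, rfl, by simpa [outFrom] using hn, by simpa [outFrom] using hb⟩
    · obtain ⟨s, a, t, rfl, hs, ha⟩ :=
        ih (T.δ q b) (n := n - (T.ν q b).length) (by omega) (by omega)
      refine ⟨b :: s, a, t, rfl, ?_, ?_⟩ <;> simp only [List.cons_append, outFrom,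
        List.length_append] <;> omega

end FST

theorem List.exists_length_eq_forall_ne_of_card_lt {C : Type*} [Finite C] (g : C → List Bool)
    {L : ℕ} (hC : Nat.card C < 2 ^ L) : ∃ ρ : List Bool, ρ.length = L ∧ ∀ c, g c ≠ ρ := by
  by_contra! hg
  choose c hc using fun f : Fin L → Bool => hg (List.ofFn f) (List.length_ofFn)
  have hinj : Function.Injective c := fun f f' h => List.ofFn_injective (by rw [← hc, ← hc, h])
  have := Nat.card_le_card_of_injective c hinj
  simp only [Nat.card_eq_fintype_card, Fintype.card_fun, Fintype.card_bool,
    Fintype.card_fin] at this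
  omega

/-- Stands in for the paper's `k`-FS-randomness of the blocks `r_j`. -/
def AvoidsShortRuns (k N : ℕ) (ρ : List Bool) : Prop :=
  ∀ T : FST, T.size ≤ k → ∀ (q : Fin T.n) (s : List Bool), s.length ≤ N → ¬ρ <:+: T.outFrom q s

/- A window of length `L` in a short run is described by the FST (`2 ^ k` choices), the start
state (`2 ^ k`), the input padded to length `N` (`2 ^ N`) and the offset
(`N * 2 ^ k < 2 ^ (k + N)`): fewer than `2 ^ L` descriptions in all. -/
theorem exists_avoidsShortRuns (k N : ℕ) :
    ∃ ρ : List Bool, ρ.length = 3 * k + 2 * N + 1 ∧ AvoidsShortRuns k N ρ := by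
  set L := 3 * k + 2 * N + 1
  let window : {T : FST // T.size ≤ k} × Fin (2 ^ k) × List.Vector Bool N × Fin (2 ^ (k + N)) →
      List Bool := fun ⟨T, q, s, d⟩ =>
    if hq : (q : ℕ) < T.1.n then ((T.1.outFrom ⟨q, hq⟩ s.toList).drop d).take L else []
  have hcard : Nat.card {T : FST // T.size ≤ k} * 2 ^ k * 2 ^ N * 2 ^ (k + N) < 2 ^ L :=
    calc _ ≤ 2 ^ k * 2 ^ k * 2 ^ N * 2 ^ (k + N) := by gcongr; exact FST.card_size_le_le k
      _ < 2 ^ L := by rw [← pow_add, ← pow_add, ← pow_add]; gcongr <;> omega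
  obtain ⟨ρ, hρ, hne⟩ := List.exists_length_eq_forall_ne_of_card_lt (L := L) window
    (by simpa [mul_assoc] using hcard)
  refine ⟨ρ, hρ, fun T hT q s hs hρs => ?_⟩
  set s' := s ++ List.replicate (N - s.length) false
  have hs' : s'.length = N := by simp only [s', List.length_append, List.length_replicate]; omega
  obtain ⟨u, v, huv⟩ : ρ <:+: T.outFrom q s' := by
    rw [FST.outFrom_append]
    exact hρs.trans (List.prefix_append _ _).isInfix
  have hu : u.length < 2 ^ (k + N) :=
    calc u.length ≤ (T.outFrom q s').length := by simp [← huv]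
      _ ≤ N * 2 ^ k := hs' ▸ FST.length_outFrom_le hT q s'
      _ < 2 ^ N * 2 ^ k := by gcongr; exact N.lt_two_pow_self
      _ = 2 ^ (k + N) := by ring
  refine hne ⟨⟨T, hT⟩, ⟨q, q.2.trans (FST.n_lt_two_pow hT)⟩, ⟨s', hs'⟩, ⟨u.length, hu⟩⟩ ?_
  simp [window, ← huv, hρ]

theorem AvoidsShortRuns.mul_le_length {k N : ℕ} {ρ : List Bool} (hρ : AvoidsShortRuns k N ρ)
    {T : FST} (hT : T.size ≤ k) (m : ℕ) (q : Fin T.n) (p w : List Bool)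
    (hp : T.outFrom q p = w ++ (List.replicate m ρ).flatten) : m * N ≤ p.length := by
  induction m generalizing q p w with
  | zero => simp
  | succ m ih =>
    rw [List.replicate_succ, List.flatten_cons, ← List.append_assoc] at hp
    have hρ0 : 0 < ρ.length := List.length_pos_iff.2 fun h =>
      hρ T hT q [] (Nat.zero_le N) (h ▸ List.nil_infix)
    -- `s ++ [a]` is the shortest input that finishes the first copy of `ρ`
    obtain ⟨s, a, t, rfl, hs, hsa⟩ := T.exists_split_of_le_length_outFrom q p
      (n := (w ++ ρ).length) (by rw [List.length_append]; omega) (by simp [hp])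
    have hwρ : w ++ ρ <+: T.outFrom q (s ++ [a]) := by
      refine List.prefix_of_prefix_length_le ⟨_, hp.symm⟩
        ⟨T.outFrom (T.stateFrom q (s ++ [a])) t, ?_⟩ hsa
      rw [← FST.outFrom_append, List.append_assoc, List.singleton_append]
    have hN : N < s.length + 1 := by
      by_contra! hN
      exact hρ T hT q (s ++ [a]) (by simpa using hN)
        ((List.suffix_append w ρ).isInfix.trans hwρ.isInfix)
    have hrest : T.outFrom (T.stateFrom q s) (a :: t) =
        (w ++ ρ).drop (T.outFrom q s).length ++ (List.replicate m ρ).flatten := by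
      rw [← List.drop_append_of_le_length hs.le, ← hp, FST.outFrom_append, List.drop_left]
    have := ih _ _ _ hrest
    simp only [List.length_append, List.length_cons] at this ⊢
    rw [Nat.succ_mul]
    omega

def blockDecoder (ρ : List Bool) : FST where
  n := 3
  npos := by norm_num
  δ q b := match q with
    | 0 => if b then 2 else 1
    | _ => 0
  ν q b := match q with
    | 0 => []
    | 1 => [b]
    | _ => if b then [] else ρ
  q0 := 0
  reach
    | 0 => ⟨[], rfl⟩
    | 1 => ⟨[false], rfl⟩
    | 2 => ⟨[true], rfl⟩

theorem blockDecoder_out (ρ w : List Bool) (m : ℕ) :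
    (blockDecoder ρ).out
        (w.flatMap (fun b => [false, b]) ++ (List.replicate m [true, false]).flatten) =
      w ++ (List.replicate m ρ).flatten := by
  have hrep : (blockDecoder ρ).outFrom (blockDecoder ρ).q0
      (List.replicate m [true, false]).flatten = (List.replicate m ρ).flatten := by
    induction m with
    | zero => rfl
    | succ m ih => simpa [List.replicate_succ, FST.outFrom, blockDecoder] using ih
  induction w with
  | nil => exact hrep
  | cons b w ih => simpa [FST.out, FST.outFrom, blockDecoder] using ih

theorem le_Dfs_of_avoidsShortRuns {k N : ℕ} {ρ : List Bool} (hρ : AvoidsShortRuns k N ρ)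
    (w : List Bool) (m : ℕ) : ((m * N : ℕ) : ℕ∞) ≤ Dfs k (w ++ (List.replicate m ρ).flatten) :=
  le_iInf₂ fun _ ⟨_, hT, hp⟩ => Nat.cast_le.2 (hρ.mul_le_length hT m _ _ w hp)

theorem Dfs_blockDecoder_le (ρ w : List Bool) (m : ℕ) :
    Dfs (blockDecoder ρ).size (w ++ (List.replicate m ρ).flatten) ≤
      ((2 * w.length + 2 * m : ℕ) : ℕ∞) :=
  (iInf₂_le _ ⟨blockDecoder ρ, le_rfl, blockDecoder_out ρ w m⟩).trans
    (Nat.cast_le.2 (by simp [mul_comm]))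

noncomputable def randomBlock (k : ℕ) : List Bool :=
  (exists_avoidsShortRuns k (8 * (k + 1))).choose

theorem length_randomBlock (k : ℕ) : (randomBlock k).length = 3 * k + 2 * (8 * (k + 1)) + 1 :=
  (exists_avoidsShortRuns k _).choose_spec.1

theorem avoidsShortRuns_randomBlock (k : ℕ) : AvoidsShortRuns k (8 * (k + 1)) (randomBlock k) :=
  (exists_avoidsShortRuns k _).choose_spec.2

noncomputable def deepPrefix : ℕ → List Bool
  | 0 => []
  | t + 1 => deepPrefix t ++
      (List.replicate ((deepPrefix t).length + 1) (randomBlock (Nat.unpair t).1)).flatten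

noncomputable def deepSeq (n : ℕ) : Bool := (deepPrefix (n + 1)).getD n false

theorem deepPrefix_prefix_deepPrefix {a b : ℕ} (h : a ≤ b) : deepPrefix a <+: deepPrefix b := by
  induction b, h using Nat.le_induction with
  | base => exact List.prefix_refl _
  | succ b _ ih => exact ih.trans (List.prefix_append _ _)

theorem le_length_deepPrefix (t : ℕ) : t ≤ (deepPrefix t).length := by
  induction t with
  | zero => exact Nat.zero_le _
  | succ t ih =>
    simp only [deepPrefix, List.length_append, List.length_flatten, List.map_replicate,
      length_randomBlock, List.sum_replicate, smul_eq_mul]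
    nlinarith

theorem pre_deepSeq (t : ℕ) : pre deepSeq (deepPrefix t).length = deepPrefix t := by
  refine List.ext_getElem (by simp [pre]) fun i _ hi => ?_
  have hi' : i < (deepPrefix (i + 1)).length := (le_length_deepPrefix _).trans_lt' (by omega)
  simp only [pre, List.getElem_map, List.getElem_range, deepSeq, List.getD_eq_getElem _ _ hi']
  rcases le_total (i + 1) t with h | h
  · exact (deepPrefix_prefix_deepPrefix h).getElem hi'
  · exact ((deepPrefix_prefix_deepPrefix h).getElem hi).symm

/- With `w = |deepPrefix t|` and `G = (w + 1) (k + 1)`, the prefix after stage `t` has length at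
most `20 G`, its `k`-complexity is at least `(w + 1) N_k = 8 G`, and `blockDecoder` describes it
with at most `4 G` bits. -/
theorem Dfs_add_le_Dfs_deepPrefix_succ {t k : ℕ} (hk : (Nat.unpair t).1 = k) :
    let n := (deepPrefix (t + 1)).length
    Dfs (blockDecoder (randomBlock k)).size (pre deepSeq n) + (⌈(1 / 5 : ℝ) * n⌉₊ : ℕ∞) ≤
      Dfs k (pre deepSeq n) := by
  intro n
  set w := (deepPrefix t).length
  have hpre :
      pre deepSeq n = deepPrefix t ++ (List.replicate (w + 1) (randomBlock k)).flatten := by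
    rw [pre_deepSeq, deepPrefix, hk]
  have hn : n = w + (w + 1) * (3 * k + 2 * (8 * (k + 1)) + 1) := by
    simp [n, w, deepPrefix, hk, length_randomBlock]
  have hceil : ⌈(1 / 5 : ℝ) * n⌉₊ ≤ 4 * ((w + 1) * (k + 1)) := by
    rw [Nat.ceil_le]
    have : n ≤ 20 * ((w + 1) * (k + 1)) := by rw [hn]; nlinarith
    have : (n : ℝ) ≤ 20 * ((w + 1) * (k + 1)) := by exact_mod_cast this
    push_cast
    linarith
  rw [hpre]
  calc _ ≤ ((2 * w + 2 * (w + 1) : ℕ) : ℕ∞) + ((4 * ((w + 1) * (k + 1)) : ℕ) : ℕ∞) :=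
        add_le_add (Dfs_blockDecoder_le _ _ _) (Nat.cast_le.2 hceil)
    _ ≤ (((w + 1) * (8 * (k + 1)) : ℕ) : ℕ∞) := by
        rw [← Nat.cast_add, Nat.cast_le]; nlinarith
    _ ≤ _ := le_Dfs_of_avoidsShortRuns (avoidsShortRuns_randomBlock k) _ _

theorem fsDeep_deepSeq : FSDeep deepSeq := by
  refine ⟨1 / 5, by norm_num, fun k => ⟨(blockDecoder (randomBlock k)).size, ?_⟩⟩
  refine Filter.frequently_atTop.2 fun n₀ => ⟨_, ?_, Dfs_add_le_Dfs_deepPrefix_succ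
    (t := Nat.pair k n₀) (Nat.unpair_pair k n₀ ▸ rfl)⟩
  calc n₀ ≤ Nat.pair k n₀ + 1 := (Nat.right_le_pair k n₀).trans (Nat.le_succ _)
    _ ≤ _ := le_length_deepPrefix _

/-- There exists a finite-state deep sequence: a sequence `S` and `α > 0` such that for every
`k` there is `k'` with `Dfs k (S↾n) − Dfs k' (S↾n) ≥ α n` for infinitely many `n`. -/
theorem exists_fs_deep_sequence :
    ∃ S : ℕ → Bool, ∃ α : ℝ, 0 < α ∧ ∀ k : ℕ, ∃ k' : ℕ, ∃ᶠ n in Filter.atTop,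
      Dfs k' (pre S n) + (⌈α * n⌉₊ : ℕ∞) ≤ Dfs k (pre S n) :=
  ⟨deepSeq, fsDeep_deepSeq⟩
end
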